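/- Let A be a subspace of ℝ^n of dimension d and let j ∈ {1,…,min(d,n−d)}. If A is (n−d,j)-irrational, then for every e ∈ {j,…,n−j}, A is (e,j)-irrational. -/

import Mathlib

/-!
A rational subspace can be shrunk to any smaller dimension inside a rational spanning set, and
enlarged to any larger dimension by adding standard basis vectors. So a rational `B` of dimension
`e` lies in (if `e ≤ n - d`) or contains (if `e ≥ n - d`) a rational `B'` of dimension `n - d`.
In the first case `A ⊓ B ≤ A ⊓ B'`. In the second, passing from `B` to `B'` lowers
`dim (A ⊓ B)` by at most `e - (n - d)`, which is exactly the growth of `g(d, e, n) = d + e - n`.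
-/

noncomputable section

open Finset Module

/-- A vector of `ℝⁿ` with integer coordinates. -/
def IsIntVec {n : ℕ} (v : EuclideanSpace ℝ (Fin n)) : Prop :=
  ∀ i, ∃ z : ℤ, v i = (z : ℝ)

/-- A rational subspace of `ℝⁿ`: one spanned by vectors with rational coordinates. -/
def IsRationalSubspace {n : ℕ} (B : Submodule ℝ (EuclideanSpace ℝ (Fin n))) : Prop :=
  ∃ s : Set (EuclideanSpace ℝ (Fin n)),
    (∀ v ∈ s, ∀ i, ∃ q : ℚ, v i = (q : ℝ)) ∧ Submodule.span ℝ s = B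

/-- `A` is `(e,j)`-irrational: every rational subspace `B` of dimension `e` satisfies
`dim (A ⊓ B) < j + g(dim A, e, n)` where `g(d,e,n) = max 0 (d+e-n)`. -/
def IsIrrational {n : ℕ} (A : Submodule ℝ (EuclideanSpace ℝ (Fin n))) (e j : ℕ) : Prop :=
  ∀ B : Submodule ℝ (EuclideanSpace ℝ (Fin n)),
    IsRationalSubspace B → finrank ℝ B = e →
      finrank ℝ ↥(A ⊓ B) < j + (finrank ℝ A + e - n)

/-- The angle `ω(X,Y) = ‖X∧Y‖ / (‖X‖·‖Y‖)`. -/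
def omegaAngle {n : ℕ} (X Y : EuclideanSpace ℝ (Fin n)) : ℝ :=
  Real.sqrt (‖X‖ ^ 2 * ‖Y‖ ^ 2 - (inner ℝ X Y : ℝ) ^ 2) / (‖X‖ * ‖Y‖)

/-- First angle `ψ₁(A,B)` between two subspaces. -/
def psiOne {n : ℕ} (A B : Submodule ℝ (EuclideanSpace ℝ (Fin n))) : ℝ :=
  sInf {t | ∃ X ∈ A, X ≠ 0 ∧ ∃ Y ∈ B, Y ≠ 0 ∧ t = omegaAngle X Y}

/-- `‖X₁ ∧ ⋯ ∧ X_e‖`, as the square root of the Gram determinant. -/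
def gramNorm {n e : ℕ} (X : Fin e → EuclideanSpace ℝ (Fin n)) : ℝ :=
  Real.sqrt (Matrix.of fun i j : Fin e => (inner ℝ (X i) (X j) : ℝ)).det

/-- `X` is a `ℤ`-basis of the lattice `B ∩ ℤⁿ`. -/
def IsZBasis {n e : ℕ} (X : Fin e → EuclideanSpace ℝ (Fin n))
    (B : Submodule ℝ (EuclideanSpace ℝ (Fin n))) : Prop :=
  (∀ i, X i ∈ B) ∧ (∀ i, IsIntVec (X i)) ∧ LinearIndependent ℝ X ∧
    ∀ v ∈ B, IsIntVec v → ∃ c : Fin e → ℤ, v = ∑ i, (c i : ℝ) • X i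

/-- The height `H(B)` of a rational subspace: the common value of `‖X₁ ∧ ⋯ ∧ X_e‖`
over `ℤ`-bases of the lattice `B ∩ ℤⁿ`. -/
def height {n : ℕ} (B : Submodule ℝ (EuclideanSpace ℝ (Fin n))) : ℝ :=
  sSup {h | ∃ e : ℕ, ∃ X : Fin e → EuclideanSpace ℝ (Fin n), IsZBasis X B ∧ h = gramNorm X}

/-- The Diophantine exponent `μ_n(A|e)₁ ∈ ℝ ∪ {+∞}`. -/
def diophExp {n : ℕ} (A : Submodule ℝ (EuclideanSpace ℝ (Fin n))) (e : ℕ) : EReal :=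
  sSup {x : EReal | ∃ μ : ℝ, x = (μ : ℝ) ∧ 0 < μ ∧
    {B : Submodule ℝ (EuclideanSpace ℝ (Fin n)) |
      IsRationalSubspace B ∧ finrank ℝ B = e ∧ psiOne A B ≤ height B ^ (-μ)}.Infinite}

open Submodule

theorem exists_subsuperset_finrank_span_eq {K V : Type*} [DivisionRing K] [AddCommGroup V]
    [Module K V] [FiniteDimensional K V] {s t : Set V} (hst : s ⊆ t) {m : ℕ}
    (hsm : finrank K (span K s) ≤ m) (hmt : m ≤ finrank K (span K t)) :
    ∃ u, s ⊆ u ∧ u ⊆ t ∧ finrank K (span K u) = m := by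
  obtain ⟨b₀, hb₀s, hb₀span, hb₀⟩ := exists_linearIndependent K s
  obtain ⟨b, hbt, hb₀b, htb, hb⟩ := exists_linearIndepOn_id_extension hb₀ (hb₀s.trans hst)
  have hbspan : span K b = span K t := le_antisymm (span_mono hbt) (span_le.2 htb)
  lift b₀ to Finset V using hb₀.setFinite
  lift b to Finset V using hb.setFinite
  rw [← hb₀span, finrank_span_finset_eq_card hb₀] at hsm
  rw [← hbspan, finrank_span_finset_eq_card hb] at hmt
  obtain ⟨u, hb₀u, hub, rfl⟩ :=
    Finset.exists_subsuperset_card_eq (by exact_mod_cast hb₀b) hsm hmt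
  have hs : span K s ≤ span K (u : Set V) := hb₀span ▸ span_mono (by exact_mod_cast hb₀u)
  have hut : (u : Set V) ⊆ b := Finset.coe_subset.2 hub
  refine ⟨s ∪ u, Set.subset_union_left, Set.union_subset hst (hut.trans hbt), ?_⟩
  rw [span_union, sup_eq_right.2 hs]
  exact finrank_span_finset_eq_card (hb.mono hut)

theorem Submodule.finrank_inf_add_finrank_le {K V : Type*} [DivisionRing K] [AddCommGroup V]
    [Module K V] [FiniteDimensional K V] (A : Submodule K V) {B' B : Submodule K V}
    (hB'B : B' ≤ B) :
    finrank K ↥(A ⊓ B) + finrank K B' ≤ finrank K ↥(A ⊓ B') + finrank K B := by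
  have hsum := finrank_sup_add_finrank_inf_eq (A ⊓ B) B'
  rw [inf_assoc, inf_eq_right.2 hB'B] at hsum
  have hsup := finrank_mono (sup_le (inf_le_right : A ⊓ B ≤ B) hB'B)
  omega

namespace IsRationalSubspace

variable {n m : ℕ} {B : Submodule ℝ (EuclideanSpace ℝ (Fin n))}

theorem exists_le (hB : IsRationalSubspace B) (hm : m ≤ finrank ℝ B) :
    ∃ B' ≤ B, IsRationalSubspace B' ∧ finrank ℝ B' = m := by
  obtain ⟨s, hs, rfl⟩ := hB
  obtain ⟨u, -, hus, hu⟩ := exists_subsuperset_finrank_span_eq (Set.empty_subset s)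
    (by rw [span_empty, finrank_bot]; exact Nat.zero_le m) hm
  exact ⟨span ℝ u, span_mono hus, ⟨u, fun v hv => hs v (hus hv), rfl⟩, hu⟩

theorem exists_ge (hB : IsRationalSubspace B) (hm : finrank ℝ B ≤ m) (hmn : m ≤ n) :
    ∃ B' ≥ B, IsRationalSubspace B' ∧ finrank ℝ B' = m := by
  obtain ⟨s, hs, rfl⟩ := hB
  set b := (EuclideanSpace.basisFun (Fin n) ℝ).toBasis
  have ht : finrank ℝ (span ℝ (s ∪ Set.range b)) = n := by
    rw [span_union, b.span_eq, sup_top_eq, finrank_top, finrank_euclideanSpace_fin]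
  obtain ⟨u, hsu, hut, hu⟩ :=
    exists_subsuperset_finrank_span_eq Set.subset_union_left hm (ht ▸ hmn)
  refine ⟨span ℝ u, span_mono hsu, ⟨u, fun v hv i => ?_, rfl⟩, hu⟩
  rcases hut hv with hv | ⟨k, rfl⟩
  · exact hs v hv i
  · exact ⟨if i = k then 1 else 0, by simp [b, apply_ite]⟩

end IsRationalSubspace

namespace IsIrrational

variable {n e e' j : ℕ} {A : Submodule ℝ (EuclideanSpace ℝ (Fin n))}

theorem of_le (h : IsIrrational A e' j) (hee' : e ≤ e') (he' : finrank ℝ A + e' ≤ n) :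
    IsIrrational A e j := by
  intro B hB hBe
  obtain ⟨B', hBB', hB', rfl⟩ := hB.exists_ge (hBe ▸ hee') (by omega)
  have h' := h B' hB' rfl
  have hmono := finrank_mono (inf_le_inf_left A hBB')
  omega

theorem of_ge (h : IsIrrational A e' j) (he'e : e' ≤ e) (he' : n ≤ finrank ℝ A + e') :
    IsIrrational A e j := by
  intro B hB hBe
  obtain ⟨B', hB'B, hB', rfl⟩ := hB.exists_le (hBe ▸ he'e)
  have h' := h B' hB' rfl
  have hcodim := A.finrank_inf_add_finrank_le hB'B
  omega

end IsIrrational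

theorem statement5 (n : ℕ) (A : Submodule ℝ (EuclideanSpace ℝ (Fin n))) (d j : ℕ)
    (hA : finrank ℝ A = d)
    (h : IsIrrational A (n - d) j) :
    ∀ e, j ≤ e → e ≤ n - j → IsIrrational A e j := by
  intro e _ _
  have hdn : d ≤ n := by simpa [hA] using A.finrank_le
  rcases le_total e (n - d) with he | he
  · exact h.of_le he (by omega)
  · exact h.of_ge he (by omega)
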